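/- arXiv:1205.0162 — 7 statements merged into one kernel-verified Lean document; each statement's English description precedes it below -/
import Mathlib

section
/- If γ_sr < γ_sd, then for any power P > 0, the DT rate log(1 + γ_sd·P) strictly exceeds the RDF rate min{(1/2)log(1+γ_sr·P_s), (1/2)log(1+γ_sd·P_s+γ_rd·P_r)} for any split P_s/2 + P_r/2 = P with P_s, P_r ≥ 0. -/
/-- If γ_sr < γ_sd, the DT rate strictly exceeds the RDF rate for any
power split Ps/2 + Pr/2 = P with Ps, Pr ≥ 0. -/
theorem stmt_0 (γsd γsr γrd : ℝ) (hsd : 0 < γsd) (hsr : 0 < γsr) (hrd : 0 < γrd)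
    (hlt : γsr < γsd) (P : ℝ) (hP : 0 < P) (Ps Pr : ℝ) (hPs : 0 ≤ Ps) (hPr : 0 ≤ Pr)
    (hsum : Ps / 2 + Pr / 2 = P) :
    min ((1 / 2) * Real.log (1 + γsr * Ps)) ((1 / 2) * Real.log (1 + γsd * Ps + γrd * Pr))
      < Real.log (1 + γsd * P) := by
  have hPsle : Ps ≤ 2 * P := by nlinarith
  have h1 : (0:ℝ) < 1 + γsr * Ps := by nlinarith
  have key : (1 / 2) * Real.log (1 + γsr * Ps) < Real.log (1 + γsd * P) := by
    have hsq : Real.log (1 + γsd * P) = (1/2) * Real.log ((1 + γsd * P)^2) := by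
      rw [Real.log_pow]; ring
    rw [hsq]
    have : 1 + γsr * Ps < (1 + γsd * P)^2 := by nlinarith [sq_nonneg (γsd * P), mul_le_mul_of_nonneg_left hPsle hsr.le, mul_lt_mul_of_pos_right hlt hP]
    have := Real.log_lt_log h1 this
    linarith
  exact lt_of_le_of_lt (min_le_left _ _) key
end

section
/- If γ_rd < γ_sd, then for any total power P > 0 and any split P_s/2 + P_r/2 = P with P_r > 0, reallocating the relay power to the source (i.e., using DT with power P) achieves a rate at least as high as the RDF rate min{(1/2)log(1+γ_sr·P_s), (1/2)log(1+γ_sd·P_s+γ_rd·P_r)}. -/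
/-- If γ_rd < γ_sd, DT with the full power P achieves a rate at least as high as the
RDF rate for any split Ps/2 + Pr/2 = P with Pr > 0. -/
theorem stmt_1 (γsd γsr γrd : ℝ) (hsd : 0 < γsd) (hsr : 0 < γsr) (hrd : 0 < γrd)
    (hlt : γrd < γsd) (P : ℝ) (hP : 0 < P) (Ps Pr : ℝ) (hPs : 0 ≤ Ps) (hPr : 0 < Pr)
    (hsum : Ps / 2 + Pr / 2 = P) :
    min ((1 / 2) * Real.log (1 + γsr * Ps)) ((1 / 2) * Real.log (1 + γsd * Ps + γrd * Pr))
      ≤ Real.log (1 + γsd * P) := by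
  have hA : (0:ℝ) < 1 + γsd * Ps + γrd * Pr := by positivity
  have hB : (1:ℝ) ≤ 1 + γsd * P := by nlinarith
  have hle : 1 + γsd * Ps + γrd * Pr ≤ (1 + γsd * P) ^ 2 := by nlinarith
  calc min ((1 / 2) * Real.log (1 + γsr * Ps)) ((1 / 2) * Real.log (1 + γsd * Ps + γrd * Pr))
      ≤ (1 / 2) * Real.log (1 + γsd * Ps + γrd * Pr) := min_le_right _ _
    _ ≤ (1 / 2) * Real.log ((1 + γsd * P) ^ 2) := by
        have := Real.log_le_log hA hle
        linarith
    _ = Real.log (1 + γsd * P) := by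
        rw [Real.log_pow]; ring
end

section
/- With the optimal power split P_s = 2P/(1 + (γ'_sr − 1)/γ'_rd), P_r = 2P − P_s, the RDF achievable rate equals (1/2)log(1 + 2αγ_sd·P), where α = γ'_sr·γ'_rd / (γ'_sr + γ'_rd − 1). -/
/-- With the optimal split, the RDF achievable rate equals (1/2)log(1 + 2αγ_sd P),
where α = γ'_sr γ'_rd / (γ'_sr + γ'_rd − 1). -/
theorem stmt_4 (γsd γsr γrd P : ℝ) (hsd : 0 < γsd) (hsr : 1 < γsr / γsd)
    (hrd : 1 < γrd / γsd) (hP : 0 < P) :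
    min ((1 / 2) * Real.log (1 + γsr * (2 * P / (1 + (γsr / γsd - 1) / (γrd / γsd)))))
        ((1 / 2) * Real.log (1 + γsd * (2 * P / (1 + (γsr / γsd - 1) / (γrd / γsd)))
          + γrd * (2 * P - 2 * P / (1 + (γsr / γsd - 1) / (γrd / γsd)))))
      = (1 / 2) * Real.log (1 + 2 * ((γsr / γsd) * (γrd / γsd) / (γsr / γsd + γrd / γsd - 1))
          * γsd * P) := by
  have hsd0 : γsd ≠ 0 := ne_of_gt hsd
  have hb : (0:ℝ) < γrd / γsd := lt_trans one_pos hrd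
  have hb0 : γrd / γsd ≠ 0 := ne_of_gt hb
  have hrd0 : γrd ≠ 0 := by
    intro h; rw [h] at hb; simp at hb
  have hsum : γsr / γsd + γrd / γsd - 1 ≠ 0 := by nlinarith
  have hsum' : γsr + γrd - γsd ≠ 0 := by
    intro h
    apply hsum
    field_simp
    linarith
  have hE : 1 + (γsr / γsd - 1) / (γrd / γsd)
      = (γsr / γsd + γrd / γsd - 1) / (γrd / γsd) := by
    field_simp
    ring
  have h1 : 1 + γsr * (2 * P / (1 + (γsr / γsd - 1) / (γrd / γsd)))
      = 1 + 2 * ((γsr / γsd) * (γrd / γsd) / (γsr / γsd + γrd / γsd - 1)) * γsd * P := by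
    rw [hE, div_div_eq_mul_div]
    field_simp [hsum']
  have h2 : 1 + γsd * (2 * P / (1 + (γsr / γsd - 1) / (γrd / γsd)))
          + γrd * (2 * P - 2 * P / (1 + (γsr / γsd - 1) / (γrd / γsd)))
      = 1 + 2 * ((γsr / γsd) * (γrd / γsd) / (γsr / γsd + γrd / γsd - 1)) * γsd * P := by
    rw [hE, div_div_eq_mul_div]
    field_simp [hsum']
    ring
  rw [h1, h2, min_self]
end

section
/- Fix 2M virtual users with rate functions f_j(P) = ω_j·log(1 + η_j·P), ω_j, η_j > 0. For any power budget P̄ > 0, the maximum of Σ_j τ_j·f_j(P_j) subject to τ_j ≥ 0, Σ_j τ_j = 1, P_j ≥ 0, Σ_j τ_j·P_j ≤ P̄ is attained at a point where at most two of the τ_j are nonzero. -/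
open Real Finset

lemma log_le_two_sqrt {x : ℝ} (hx : 0 ≤ x) : Real.log (1+x) ≤ 2 * Real.sqrt x := by
  have hs := Real.sqrt_nonneg x
  have hsq := Real.sq_sqrt hx
  have h1 : (1:ℝ) + x ≤ (1 + Real.sqrt x)^2 := by nlinarith
  calc Real.log (1+x) ≤ Real.log ((1+Real.sqrt x)^2) :=
        Real.log_le_log (by positivity) h1
    _ = 2 * Real.log (1 + Real.sqrt x) := by rw [Real.log_pow]; push_cast; ring
    _ ≤ 2 * Real.sqrt x := by
        have := Real.log_le_sub_one_of_pos (x := 1 + Real.sqrt x) (by positivity)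
        linarith

noncomputable def hfun (w e t q : ℝ) : ℝ := t * (w * Real.log (1 + e * (q / t)))

lemma hfun_nonneg {w e t q : ℝ} (hw : 0 < w) (he : 0 < e) (ht : 0 ≤ t) (hq : 0 ≤ q) :
    0 ≤ hfun w e t q := by
  have h1 : (0:ℝ) ≤ e * (q / t) := by positivity
  have h2 : 0 ≤ Real.log (1 + e * (q / t)) := Real.log_nonneg (by linarith)
  exact mul_nonneg ht (mul_nonneg hw.le h2)

lemma hfun_le {w e t q : ℝ} (hw : 0 < w) (he : 0 < e) (ht : 0 ≤ t) (hq : 0 ≤ q) :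
    hfun w e t q ≤ 2 * w * Real.sqrt (e * (q * t)) := by
  rcases eq_or_lt_of_le ht with rfl | ht'
  · simp [hfun]
  · have h1 : (0:ℝ) ≤ e * (q / t) := by positivity
    have h2 : Real.log (1 + e * (q / t)) ≤ 2 * Real.sqrt (e * (q / t)) :=
      log_le_two_sqrt h1
    have h3 : t * Real.sqrt (e * (q / t)) = Real.sqrt (e * (q * t)) := by
      rw [show t * Real.sqrt (e * (q / t)) = Real.sqrt (t^2) * Real.sqrt (e * (q/t)) by
            rw [Real.sqrt_sq ht],
          ← Real.sqrt_mul (by positivity)]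
      congr 1
      field_simp
    calc hfun w e t q ≤ t * (w * (2 * Real.sqrt (e * (q / t)))) := by
          apply mul_le_mul_of_nonneg_left _ ht
          exact mul_le_mul_of_nonneg_left h2 hw.le
      _ = 2 * w * (t * Real.sqrt (e * (q / t))) := by ring
      _ = 2 * w * Real.sqrt (e * (q * t)) := by rw [h3]

lemma hfun_contOn {w e : ℝ} (hw : 0 < w) (he : 0 < e) :
    ContinuousOn (fun p : ℝ × ℝ => hfun w e p.1 p.2) {p : ℝ × ℝ | 0 ≤ p.1 ∧ 0 ≤ p.2} := by
  intro p hp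
  rcases eq_or_lt_of_le hp.1 with h0 | h0
  · -- p.1 = 0 : squeeze
    have hval : hfun w e p.1 p.2 = 0 := by simp [hfun, ← h0]
    rw [ContinuousWithinAt, hval]
    have hup : Filter.Tendsto (fun z : ℝ × ℝ => 2 * w * Real.sqrt (e * (z.2 * z.1)))
        (nhdsWithin p {p : ℝ × ℝ | 0 ≤ p.1 ∧ 0 ≤ p.2}) (nhds 0) := by
      have : ContinuousAt (fun z : ℝ × ℝ => 2 * w * Real.sqrt (e * (z.2 * z.1))) p := by
        fun_prop
      have h2 := this.continuousWithinAt (s := {p : ℝ × ℝ | 0 ≤ p.1 ∧ 0 ≤ p.2})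
      rw [ContinuousWithinAt] at h2
      convert h2 using 2
      simp [← h0]
    apply tendsto_of_tendsto_of_tendsto_of_le_of_le' tendsto_const_nhds hup
    · filter_upwards [self_mem_nhdsWithin] with z hz
      exact hfun_nonneg hw he hz.1 hz.2
    · filter_upwards [self_mem_nhdsWithin] with z hz
      exact hfun_le hw he hz.1 hz.2
  · apply ContinuousAt.continuousWithinAt
    have hne : p.1 ≠ 0 := ne_of_gt h0
    have hargpos : (0:ℝ) ≤ e * (p.2 / p.1) := mul_nonneg he.le (div_nonneg hp.2 h0.le)
    have this1 : ContinuousAt (fun z : ℝ × ℝ => 1 + e * (z.2 / z.1)) p := by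
      apply ContinuousAt.add continuousAt_const
      exact (continuousAt_const.mul ((continuousAt_snd).div continuousAt_fst hne))
    have hcomp : ContinuousAt (fun z : ℝ × ℝ => Real.log (1 + e * (z.2 / z.1))) p :=
      this1.log (by positivity)
    exact continuousAt_fst.mul (continuousAt_const.mul hcomp)

-- step along a direction d in the kernel of the constraints until a coordinate of τ hits 0
lemma move {n : ℕ} (cc P τ d : Fin n → ℝ) (hτ : ∀ j, 0 ≤ τ j)
    (hd1 : ∑ j, d j = 0) (hdP : ∑ j, d j * P j = 0) (hdc : 0 ≤ ∑ j, d j * cc j)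
    (hsupp : ∀ j, d j ≠ 0 → τ j ≠ 0) (hneg : ∃ j, d j < 0) :
    ∃ τ' : Fin n → ℝ, (∀ j, 0 ≤ τ' j) ∧ (∑ j, τ' j) = (∑ j, τ j) ∧
      (∑ j, τ' j * P j) = (∑ j, τ j * P j) ∧ (∑ j, τ j * cc j) ≤ (∑ j, τ' j * cc j) ∧
      (univ.filter (fun j => τ' j ≠ 0)).card < (univ.filter (fun j => τ j ≠ 0)).card := by
  classical
  set S : Finset (Fin n) := univ.filter (fun j => d j < 0) with hS
  have hSne : S.Nonempty := by
    obtain ⟨j, hj⟩ := hneg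
    exact ⟨j, by simp [hS, hj]⟩
  set s : ℝ := S.inf' hSne (fun j => τ j / (-d j)) with hs
  have hmemS : ∀ j ∈ S, d j < 0 := by intro j hj; simpa [hS] using hj
  have hτpos : ∀ j ∈ S, 0 < τ j := by
    intro j hj
    exact lt_of_le_of_ne (hτ j) (Ne.symm (hsupp j (ne_of_lt (hmemS j hj))))
  have hs0 : 0 ≤ s := by
    apply Finset.le_inf'
    intro j hj
    exact le_of_lt (div_pos (hτpos j hj) (by linarith [hmemS j hj]))
  obtain ⟨j₀, hj₀S, hj₀⟩ := Finset.exists_mem_eq_inf' hSne (fun j => τ j / (-d j))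
  have hdj₀ : d j₀ < 0 := hmemS j₀ hj₀S
  refine ⟨fun j => τ j + s * d j, ?_, ?_, ?_, ?_, ?_⟩
  · intro j
    dsimp only
    rcases lt_or_ge (d j) 0 with hdj | hdj
    · have hjS : j ∈ S := by simp [hS, hdj]
      have : s ≤ τ j / (-d j) := Finset.inf'_le _ hjS
      have h2 : s * (-d j) ≤ τ j := by
        rw [← le_div_iff₀ (by linarith)]
        exact this
      nlinarith
    · nlinarith [mul_nonneg hs0 hdj, hτ j]
  · rw [Finset.sum_add_distrib, ← Finset.mul_sum, hd1]; ring
  · have : ∀ j, (τ j + s * d j) * P j = τ j * P j + s * (d j * P j) := by intro j; ring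
    simp only [this]
    rw [Finset.sum_add_distrib, ← Finset.mul_sum, hdP]; ring
  · have : ∀ j, (τ j + s * d j) * cc j = τ j * cc j + s * (d j * cc j) := by intro j; ring
    simp only [this]
    rw [Finset.sum_add_distrib, ← Finset.mul_sum]
    nlinarith
  · apply Finset.card_lt_card
    constructor
    · intro j hj
      simp only [Finset.mem_filter, Finset.mem_univ, true_and] at hj ⊢
      intro h0
      apply hj
      have : d j = 0 := by
        by_contra hd
        exact hsupp j hd h0
      simp [h0, this]
    · intro hsub
      have hj₀mem : j₀ ∈ univ.filter (fun j => τ j ≠ 0) := by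
        simp only [Finset.mem_filter, Finset.mem_univ, true_and]
        exact hsupp j₀ (ne_of_lt hdj₀)
      have := hsub hj₀mem
      simp only [Finset.mem_filter, Finset.mem_univ, true_and] at this
      apply this
      rw [hs, hj₀]
      have hd0 : d j₀ ≠ 0 := ne_of_lt hdj₀
      have hx : τ j₀ * d j₀ / -d j₀ = -τ j₀ := by
        rw [div_eq_iff (neg_ne_zero.mpr hd0)]; ring
      rw [div_mul_eq_mul_div, hx]
      ring

lemma sum_single_mul {n : ℕ} (a : Fin n) (y : ℝ) (g : Fin n → ℝ) :
    ∑ j, (Pi.single a y : Fin n → ℝ) j * g j = y * g a := by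
  classical
  rw [Finset.sum_eq_single a]
  · simp
  · intro b _ hb
    simp [Pi.single_eq_of_ne hb]
  · simp

lemma exists_neg_coord {n : ℕ} (d : Fin n → ℝ) (h1 : ∑ j, d j = 0) (hk : ∃ k, d k ≠ 0) :
    ∃ j, d j < 0 := by
  by_contra h
  push_neg at h
  obtain ⟨k, hk⟩ := hk
  exact hk ((Finset.sum_eq_zero_iff_of_nonneg (fun j _ => h j)).mp h1 k (Finset.mem_univ k))

lemma move' {n : ℕ} (cc P τ d : Fin n → ℝ) (hτ : ∀ j, 0 ≤ τ j)
    (hd1 : ∑ j, d j = 0) (hdP : ∑ j, d j * P j = 0) (hk : ∃ k, d k ≠ 0)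
    (hsupp : ∀ j, d j ≠ 0 → τ j ≠ 0) :
    ∃ τ' : Fin n → ℝ, (∀ j, 0 ≤ τ' j) ∧ (∑ j, τ' j) = (∑ j, τ j) ∧
      (∑ j, τ' j * P j) = (∑ j, τ j * P j) ∧ (∑ j, τ j * cc j) ≤ (∑ j, τ' j * cc j) ∧
      (univ.filter (fun j => τ' j ≠ 0)).card < (univ.filter (fun j => τ j ≠ 0)).card := by
  rcases le_or_gt 0 (∑ j, d j * cc j) with hsign | hsign
  · exact move cc P τ d hτ hd1 hdP hsign hsupp (exists_neg_coord d hd1 hk)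
  · have hd1' : ∑ j, (-d) j = 0 := by
      simp only [Pi.neg_apply, Finset.sum_neg_distrib, hd1, neg_zero]
    have hdP' : ∑ j, (-d) j * P j = 0 := by
      simp only [Pi.neg_apply, neg_mul, Finset.sum_neg_distrib, hdP, neg_zero]
    have hsign' : 0 ≤ ∑ j, (-d) j * cc j := by
      simp only [Pi.neg_apply, neg_mul, Finset.sum_neg_distrib]
      linarith
    have hk' : ∃ k, (-d) k ≠ 0 := by
      obtain ⟨k, hk⟩ := hk
      exact ⟨k, by simpa using hk⟩
    have hsupp' : ∀ j, (-d) j ≠ 0 → τ j ≠ 0 := by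
      intro j hj
      exact hsupp j (by simpa using hj)
    exact move cc P τ (-d) hτ hd1' hdP' hsign' hsupp' (exists_neg_coord (-d) hd1' hk')

lemma exchange {n : ℕ} (cc P τ : Fin n → ℝ) (hτ : ∀ j, 0 ≤ τ j)
    (h3 : 3 ≤ (univ.filter (fun j => τ j ≠ 0)).card) :
    ∃ τ' : Fin n → ℝ, (∀ j, 0 ≤ τ' j) ∧ (∑ j, τ' j) = (∑ j, τ j) ∧
      (∑ j, τ' j * P j) = (∑ j, τ j * P j) ∧ (∑ j, τ j * cc j) ≤ (∑ j, τ' j * cc j) ∧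
      (univ.filter (fun j => τ' j ≠ 0)).card < (univ.filter (fun j => τ j ≠ 0)).card := by
  classical
  obtain ⟨t, hts, htcard⟩ := Finset.exists_subset_card_eq h3
  obtain ⟨a, b, c, hab, hac, hbc, rfl⟩ := Finset.card_eq_three.mp htcard
  have hmem : ∀ x ∈ ({a, b, c} : Finset (Fin n)), τ x ≠ 0 := by
    intro x hx
    have := hts hx
    simp only [Finset.mem_filter] at this
    exact this.2
  have hτa : τ a ≠ 0 := hmem a (by simp)
  have hτb : τ b ≠ 0 := hmem b (by simp)
  have hτc : τ c ≠ 0 := hmem c (by simp)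
  by_cases hPab : P a = P b
  · -- use d = e_a - e_b
    set d : Fin n → ℝ := Pi.single a 1 + Pi.single b (-1) with hd
    have hsplit : ∀ j, d j = (Pi.single a 1 : Fin n → ℝ) j
        + (Pi.single b (-1) : Fin n → ℝ) j := fun j => rfl
    have hda : d a = 1 := by
      rw [hsplit]
      rw [Pi.single_eq_same, Pi.single_eq_of_ne hab]
      ring
    have hd1 : ∑ j, d j = 0 := by
      simp only [hsplit, Finset.sum_add_distrib, Finset.sum_pi_single']
      simp
    have hdP : ∑ j, d j * P j = 0 := by
      have h2 : ∀ j, d j * P j = (Pi.single a 1 : Fin n → ℝ) j * P j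
          + (Pi.single b (-1) : Fin n → ℝ) j * P j := by
        intro j; rw [hsplit]; ring
      simp only [h2, Finset.sum_add_distrib, sum_single_mul]
      rw [hPab]; ring
    have hsupp : ∀ j, d j ≠ 0 → τ j ≠ 0 := by
      intro j hj
      by_contra h0
      apply hj
      have hja : j ≠ a := fun h => hτa (h ▸ h0)
      have hjb : j ≠ b := fun h => hτb (h ▸ h0)
      rw [hsplit, Pi.single_eq_of_ne hja, Pi.single_eq_of_ne hjb]
      ring
    exact move' cc P τ d hτ hd1 hdP ⟨a, by rw [hda]; norm_num⟩ hsupp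
  · -- use d = (P b - P c)·e_a + (P c - P a)·e_b + (P a - P b)·e_c
    set d : Fin n → ℝ := Pi.single a (P b - P c) + Pi.single b (P c - P a)
        + Pi.single c (P a - P b) with hd
    have hsplit : ∀ j, d j = (Pi.single a (P b - P c) : Fin n → ℝ) j
        + (Pi.single b (P c - P a) : Fin n → ℝ) j
        + (Pi.single c (P a - P b) : Fin n → ℝ) j := fun j => rfl
    have hdc : d c = P a - P b := by
      rw [hsplit, Pi.single_eq_same, Pi.single_eq_of_ne (Ne.symm hac),
        Pi.single_eq_of_ne (Ne.symm hbc)]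
      ring
    have hd1 : ∑ j, d j = 0 := by
      simp only [hsplit, Finset.sum_add_distrib, Finset.sum_pi_single']
      simp
    have hdP : ∑ j, d j * P j = 0 := by
      have h2 : ∀ j, d j * P j = (Pi.single a (P b - P c) : Fin n → ℝ) j * P j
          + (Pi.single b (P c - P a) : Fin n → ℝ) j * P j
          + (Pi.single c (P a - P b) : Fin n → ℝ) j * P j := by
        intro j; rw [hsplit]; ring
      simp only [h2, Finset.sum_add_distrib, sum_single_mul]
      ring
    have hsupp : ∀ j, d j ≠ 0 → τ j ≠ 0 := by
      intro j hj
      by_contra h0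
      apply hj
      have hja : j ≠ a := fun h => hτa (h ▸ h0)
      have hjb : j ≠ b := fun h => hτb (h ▸ h0)
      have hjc : j ≠ c := fun h => hτc (h ▸ h0)
      rw [hsplit, Pi.single_eq_of_ne hja, Pi.single_eq_of_ne hjb, Pi.single_eq_of_ne hjc]
      ring
    exact move' cc P τ d hτ hd1 hdP ⟨c, by rw [hdc]; exact sub_ne_zero.mpr hPab⟩ hsupp

lemma reduce_support {n : ℕ} (cc P : Fin n → ℝ) :
    ∀ (k : ℕ) (τ : Fin n → ℝ), (univ.filter (fun j => τ j ≠ 0)).card ≤ k →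
      (∀ j, 0 ≤ τ j) →
      ∃ τ' : Fin n → ℝ, (∀ j, 0 ≤ τ' j) ∧ (∑ j, τ' j) = (∑ j, τ j) ∧
        (∑ j, τ' j * P j) = (∑ j, τ j * P j) ∧ (∑ j, τ j * cc j) ≤ (∑ j, τ' j * cc j) ∧
        (univ.filter (fun j => τ' j ≠ 0)).card ≤ 2 := by
  intro k
  induction k with
  | zero =>
    intro τ hcard hτ
    exact ⟨τ, hτ, rfl, rfl, le_refl _, le_trans hcard (by norm_num)⟩
  | succ k ih =>
    intro τ hcard hτ
    rcases le_or_gt (univ.filter (fun j => τ j ≠ 0)).card 2 with h2 | h2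
    · exact ⟨τ, hτ, rfl, rfl, le_refl _, h2⟩
    · obtain ⟨τ₁, hτ₁, hsum₁, hsumP₁, hval₁, hlt₁⟩ := exchange cc P τ hτ (by omega)
      obtain ⟨τ', hτ', hsum', hsumP', hval', h2'⟩ := ih τ₁ (by omega) hτ₁
      exact ⟨τ', hτ', by rw [hsum', hsum₁], by rw [hsumP', hsumP₁],
        le_trans hval₁ hval', h2'⟩

lemma cover_of_card_le_two {α : Type*} [DecidableEq α] (s : Finset α) (hs : s.card ≤ 2)
    (a₀ : α) : ∃ j₁ j₂ : α, ∀ j ∈ s, j = j₁ ∨ j = j₂ := by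
  rcases s.eq_empty_or_nonempty with rfl | ⟨a, ha⟩
  · exact ⟨a₀, a₀, by simp⟩
  rcases (s.erase a).eq_empty_or_nonempty with he | ⟨b, hb⟩
  · refine ⟨a, a, fun j hj => ?_⟩
    by_contra hc
    push_neg at hc
    have : j ∈ s.erase a := Finset.mem_erase.mpr ⟨hc.1, hj⟩
    simp [he] at this
  · refine ⟨a, b, fun j hj => ?_⟩
    by_contra hc
    push_neg at hc
    have hbs : b ∈ s := Finset.mem_of_mem_erase hb
    have hba : b ≠ a := Finset.ne_of_mem_erase hb
    have : 2 < s.card := Finset.two_lt_card.mpr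
      ⟨a, ha, b, hbs, j, hj, Ne.symm hba, Ne.symm hc.1, Ne.symm hc.2⟩
    omega


/-- For 2M virtual users with rates f_j(P) = ω_j log(1+η_j P), the weighted sum rate
subject to bandwidth shares summing to 1 and average power at most P̄ is maximized
at a point where at most two of the shares τ_j are nonzero. -/
theorem stmt_10 (M : ℕ) (hM : 0 < M) (ω η : Fin (2 * M) → ℝ)
    (hω : ∀ j, 0 < ω j) (hη : ∀ j, 0 < η j) (Pbar : ℝ) (hP : 0 < Pbar) :
    ∃ τ P : Fin (2 * M) → ℝ,
      (∀ j, 0 ≤ τ j) ∧ (∑ j, τ j) = 1 ∧ (∀ j, 0 ≤ P j) ∧ (∑ j, τ j * P j) ≤ Pbar ∧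
      (∃ j₁ j₂ : Fin (2 * M), ∀ j, τ j ≠ 0 → j = j₁ ∨ j = j₂) ∧
      (∀ τ' P' : Fin (2 * M) → ℝ,
        (∀ j, 0 ≤ τ' j) → (∑ j, τ' j) = 1 → (∀ j, 0 ≤ P' j) → (∑ j, τ' j * P' j) ≤ Pbar →
        ∑ j, τ' j * (ω j * Real.log (1 + η j * P' j))
          ≤ ∑ j, τ j * (ω j * Real.log (1 + η j * P j))) := by
  classical
  have i₀ : Fin (2 * M) := ⟨0, by omega⟩
  set K : Set ((Fin (2 * M) → ℝ) × (Fin (2 * M) → ℝ)) :=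
    {x | (∀ j, 0 ≤ x.1 j) ∧ (∑ j, x.1 j) = 1 ∧ (∀ j, 0 ≤ x.2 j) ∧ (∑ j, x.2 j) ≤ Pbar}
    with hK
  -- K is closed
  have hclosed : IsClosed K := by
    have hKeq : K = (⋂ j, {x : (Fin (2 * M) → ℝ) × (Fin (2 * M) → ℝ) | 0 ≤ x.1 j}) ∩
        ({x | (∑ j, x.1 j) = 1} ∩
          ((⋂ j, {x : (Fin (2 * M) → ℝ) × (Fin (2 * M) → ℝ) | 0 ≤ x.2 j}) ∩
            {x | (∑ j, x.2 j) ≤ Pbar})) := by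
      ext x
      simp only [hK, Set.mem_setOf_eq, Set.mem_inter_iff, Set.mem_iInter]
    rw [hKeq]
    have c1 : ∀ j : Fin (2 * M), Continuous fun x : (Fin (2 * M) → ℝ) × (Fin (2 * M) → ℝ)
        => x.1 j := fun j => (continuous_apply j).comp continuous_fst
    have c2 : ∀ j : Fin (2 * M), Continuous fun x : (Fin (2 * M) → ℝ) × (Fin (2 * M) → ℝ)
        => x.2 j := fun j => (continuous_apply j).comp continuous_snd
    refine (isClosed_iInter fun j => isClosed_le continuous_const (c1 j)).inter
      (IsClosed.inter ?_ (IsClosed.inter ?_ ?_))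
    · exact isClosed_eq (continuous_finset_sum _ fun j _ => c1 j) continuous_const
    · exact isClosed_iInter fun j => isClosed_le continuous_const (c2 j)
    · exact isClosed_le (continuous_finset_sum _ fun j _ => c2 j) continuous_const
  -- K is compact
  have hsub : K ⊆ (Set.Icc (fun _ => (0:ℝ)) (fun _ => 1)) ×ˢ
      (Set.Icc (fun _ => (0:ℝ)) (fun _ => Pbar)) := by
    rintro ⟨τ, q⟩ ⟨h1, h2, h3, h4⟩
    constructor
    · refine Set.mem_Icc.mpr ⟨fun j => h1 j, fun j => ?_⟩
      have := Finset.single_le_sum (f := τ) (fun i _ => h1 i) (Finset.mem_univ j)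
      rw [h2] at this
      exact this
    · refine Set.mem_Icc.mpr ⟨fun j => h3 j, fun j => ?_⟩
      exact le_trans (Finset.single_le_sum (f := q) (fun i _ => h3 i) (Finset.mem_univ j)) h4
  have hKcomp : IsCompact K :=
    (isCompact_Icc.prod isCompact_Icc).of_isClosed_subset hclosed hsub
  -- the objective
  set F : (Fin (2 * M) → ℝ) × (Fin (2 * M) → ℝ) → ℝ :=
    fun x => ∑ j, hfun (ω j) (η j) (x.1 j) (x.2 j) with hF
  have hFcont : ContinuousOn F K := by
    apply continuousOn_finset_sum
    intro j _
    have hm : Set.MapsTo (fun x : (Fin (2 * M) → ℝ) × (Fin (2 * M) → ℝ) => (x.1 j, x.2 j))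
        K {p : ℝ × ℝ | 0 ≤ p.1 ∧ 0 ≤ p.2} := by
      rintro ⟨τ, q⟩ ⟨h1, _, h3, _⟩
      exact ⟨h1 j, h3 j⟩
    exact ((hfun_contOn (hω j) (hη j)).comp
      ((Continuous.prodMk ((continuous_apply j).comp continuous_fst)
        ((continuous_apply j).comp continuous_snd)).continuousOn) hm)
  -- K nonempty
  have hx₀ : ((Pi.single i₀ 1 : Fin (2 * M) → ℝ), (fun _ => 0 : Fin (2 * M) → ℝ)) ∈ K := by
    refine ⟨fun j => ?_, ?_, fun j => le_refl 0, by simp [hP.le]⟩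
    · dsimp only
      rw [Pi.single_apply]
      split <;> norm_num
    · simp [Finset.sum_pi_single']
  obtain ⟨x, hxK, hxmax⟩ := hKcomp.exists_isMaxOn ⟨_, hx₀⟩ hFcont
  obtain ⟨hx1, hx2, hx3, hx4⟩ := hxK
  -- the candidate powers and rates
  set P0 : Fin (2 * M) → ℝ := fun j => x.2 j / x.1 j with hP0
  set c0 : Fin (2 * M) → ℝ := fun j => ω j * Real.log (1 + η j * P0 j) with hc0
  have hFx : F x = ∑ j, x.1 j * c0 j := by
    simp only [hF, hfun, hc0, hP0]
  -- bridging identity for feasible points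
  have key : ∀ (w e t p : ℝ), t ≠ 0 → hfun w e t (t * p) = t * (w * Real.log (1 + e * p)) := by
    intro w e t p ht
    simp [hfun, mul_div_cancel_left₀ _ ht]
  have keyz : ∀ (w e p : ℝ), hfun w e 0 (0 * p) = 0 := by intro w e p; simp [hfun]
  -- power constraint for (x.1, P0)
  have hpow : ∑ j, x.1 j * P0 j ≤ Pbar := by
    refine le_trans (Finset.sum_le_sum fun j _ => ?_) hx4
    rcases eq_or_ne (x.1 j) 0 with h0 | h0
    · simp [h0, hx3 j]
    · rw [hP0]
      rw [mul_div_cancel₀ _ h0]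
  -- reduce support
  obtain ⟨τ1, hτ1, hsum1, hsumP1, hval1, hcard1⟩ :=
    reduce_support c0 P0 ((univ.filter (fun j => x.1 j ≠ 0)).card) x.1 (le_refl _) hx1
  refine ⟨τ1, P0, hτ1, by rw [hsum1, hx2], fun j => div_nonneg (hx3 j) (hx1 j), ?_, ?_, ?_⟩
  · rw [hsumP1]; exact hpow
  · obtain ⟨j₁, j₂, hcov⟩ := cover_of_card_le_two _ hcard1 i₀
    exact ⟨j₁, j₂, fun j hj => hcov j (by simp [hj])⟩
  · intro τ' P' h1' h2' h3' h4'
    have hfeas : ((τ', fun j => τ' j * P' j) :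
        (Fin (2 * M) → ℝ) × (Fin (2 * M) → ℝ)) ∈ K :=
      ⟨h1', h2', fun j => mul_nonneg (h1' j) (h3' j), h4'⟩
    have hle := hxmax hfeas
    have hFy : F (τ', fun j => τ' j * P' j) = ∑ j, τ' j * (ω j * Real.log (1 + η j * P' j)) := by
      rw [hF]
      refine Finset.sum_congr rfl fun j _ => ?_
      rcases eq_or_ne (τ' j) 0 with h0 | h0
      · simp only [h0]
        simpa using keyz (ω j) (η j) (P' j)
      · exact key (ω j) (η j) (τ' j) (P' j) h0
    calc ∑ j, τ' j * (ω j * Real.log (1 + η j * P' j))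
        = F (τ', fun j => τ' j * P' j) := hFy.symm
      _ ≤ F x := hle
      _ = ∑ j, x.1 j * c0 j := hFx
      _ ≤ ∑ j, τ1 j * c0 j := hval1
      _ = ∑ j, τ1 j * (ω j * Real.log (1 + η j * P0 j)) := rfl
end

section
/- The single-user (near-optimal) allocation τ_m = 1, P_m = P̄ with m = argmax_j f_j(P̄) achieves a value within the gap between the pointwise maximum h(P) = max_j f_j(P) and its concave envelope at P̄; in particular it is exactly optimal whenever P̄ lies in an interval where the concave envelope of h coincides with h. -/
/-! Every feasible allocation is bounded by `g P̄` for each concave majorant `g` of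
`h = max_j f_j` on `[0, ∞)`: hand the unused budget to every user (harmless, as the `f_j` are
increasing) and apply Jensen's inequality. Since `log (1 + x) ≤ x`, the majorants include a linear
function, so the infimum defining the envelope is over a nonempty set. -/

open Real Set Finset

/-- The concave envelope on `[0, ∞)` of `fun y ↦ ⨆ j, f j y`, as the infimum of the values at `x`
of its concave majorants (junk value `0` when there is no concave majorant). -/
noncomputable def concaveEnvelope {ι : Type*} (f : ι → ℝ → ℝ) (x : ℝ) : ℝ :=
  sInf {v : ℝ | ∃ g : ℝ → ℝ, ConcaveOn ℝ (Ici 0) g ∧ (∀ y, 0 ≤ y → ∀ j, f j y ≤ g y) ∧ v = g x}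

section Allocation

variable {ι : Type*} [Fintype ι] {f : ι → ℝ → ℝ} {τ P : ι → ℝ} {Pbar : ℝ}

theorem sum_mul_le_of_concaveOn_majorant (hf : ∀ j, MonotoneOn (f j) (Ici 0)) {g : ℝ → ℝ}
    (hg : ConcaveOn ℝ (Ici 0) g) (hfg : ∀ y, 0 ≤ y → ∀ j, f j y ≤ g y)
    (hτ0 : ∀ j, 0 ≤ τ j) (hτ1 : ∑ j, τ j = 1) (hP0 : ∀ j, 0 ≤ P j)
    (hPbar : ∑ j, τ j * P j ≤ Pbar) :
    ∑ j, τ j * f j (P j) ≤ g Pbar := by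
  set δ := Pbar - ∑ j, τ j * P j
  have hδ : 0 ≤ δ := sub_nonneg.2 hPbar
  have hPδ : ∀ j, 0 ≤ P j + δ := fun j => add_nonneg (hP0 j) hδ
  have hbudget : ∑ j, τ j * (P j + δ) = Pbar := by
    simp only [mul_add, sum_add_distrib, ← sum_mul, hτ1, one_mul, δ]
    ring
  calc ∑ j, τ j * f j (P j)
      ≤ ∑ j, τ j * g (P j + δ) := by
        gcongr with j
        · exact hτ0 j
        · exact (hf j (hP0 j) (hPδ j) (le_add_of_nonneg_right hδ)).trans (hfg _ (hPδ j) j)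
    _ ≤ g (∑ j, τ j * (P j + δ)) :=
        hg.le_map_sum (fun j _ => hτ0 j) hτ1 (fun j _ => hPδ j)
    _ = g Pbar := by rw [hbudget]

theorem sum_mul_le_concaveEnvelope (hf : ∀ j, MonotoneOn (f j) (Ici 0))
    (hmaj : ∃ g : ℝ → ℝ, ConcaveOn ℝ (Ici 0) g ∧ ∀ y, 0 ≤ y → ∀ j, f j y ≤ g y)
    (hτ0 : ∀ j, 0 ≤ τ j) (hτ1 : ∑ j, τ j = 1) (hP0 : ∀ j, 0 ≤ P j)
    (hPbar : ∑ j, τ j * P j ≤ Pbar) :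
    ∑ j, τ j * f j (P j) ≤ concaveEnvelope f Pbar := by
  obtain ⟨g, hg, hfg⟩ := hmaj
  refine le_csInf ⟨g Pbar, g, hg, hfg, rfl⟩ ?_
  rintro _ ⟨g', hg', hfg', rfl⟩
  exact sum_mul_le_of_concaveOn_majorant hf hg' hfg' hτ0 hτ1 hP0 hPbar

end Allocation

theorem monotoneOn_mul_log_one_add_mul {ω η : ℝ} (hω : 0 ≤ ω) (hη : 0 ≤ η) :
    MonotoneOn (fun y => ω * log (1 + η * y)) (Ici 0) := by
  intro x hx y _ hxy
  have hx' : 0 < 1 + η * x := by have := mul_nonneg hη (mem_Ici.1 hx); linarith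
  dsimp only
  gcongr

theorem mul_log_one_add_mul_le {ω η y : ℝ} (hω : 0 ≤ ω) (hη : 0 ≤ η) (hy : 0 ≤ y) :
    ω * log (1 + η * y) ≤ ω * η * y := by
  have := log_le_sub_one_of_pos (x := 1 + η * y) (by positivity)
  rw [mul_assoc]
  gcongr
  linarith

theorem exists_concaveOn_majorant_mul_log_one_add_mul {ι : Type*} [Fintype ι] {ω η : ι → ℝ}
    (hω : ∀ j, 0 ≤ ω j) (hη : ∀ j, 0 ≤ η j) :
    ∃ g : ℝ → ℝ, ConcaveOn ℝ (Ici 0) g ∧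
      ∀ y, 0 ≤ y → ∀ j, ω j * log (1 + η j * y) ≤ g y := by
  refine ⟨fun y => (∑ i, ω i * η i) * y, ?_, fun y hy j => ?_⟩
  · exact (LinearMap.mulLeft ℝ (∑ i, ω i * η i)).concaveOn (convex_Ici 0)
  · calc ω j * log (1 + η j * y) ≤ ω j * η j * y := mul_log_one_add_mul_le (hω j) (hη j) hy
      _ ≤ (∑ i, ω i * η i) * y := by
        gcongr
        exact single_le_sum (fun i _ => mul_nonneg (hω i) (hη i)) (mem_univ j)

theorem stmt_11_general {n : ℕ} (ω η : Fin n → ℝ)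
    (hω : ∀ j, 0 < ω j) (hη : ∀ j, 0 < η j) (Pbar : ℝ) (hP : 0 < Pbar)
    (m : Fin n) :
    (∃ τ P : Fin n → ℝ,
      (∀ j, 0 ≤ τ j) ∧ (∑ j, τ j) = 1 ∧ (∀ j, 0 ≤ P j) ∧ (∑ j, τ j * P j) ≤ Pbar ∧
      ∑ j, τ j * (ω j * Real.log (1 + η j * P j)) = ω m * Real.log (1 + η m * Pbar)) ∧
    (∀ τ P : Fin n → ℝ,
      (∀ j, 0 ≤ τ j) → (∑ j, τ j) = 1 → (∀ j, 0 ≤ P j) → (∑ j, τ j * P j) ≤ Pbar →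
      ∑ j, τ j * (ω j * Real.log (1 + η j * P j))
        ≤ sInf {v : ℝ | ∃ g : ℝ → ℝ, ConcaveOn ℝ (Set.Ici 0) g ∧
            (∀ y, 0 ≤ y → ∀ j, ω j * Real.log (1 + η j * y) ≤ g y) ∧ v = g Pbar}) ∧
    ((sInf {v : ℝ | ∃ g : ℝ → ℝ, ConcaveOn ℝ (Set.Ici 0) g ∧
        (∀ y, 0 ≤ y → ∀ j, ω j * Real.log (1 + η j * y) ≤ g y) ∧ v = g Pbar})
        = ω m * Real.log (1 + η m * Pbar) →
      ∀ τ P : Fin n → ℝ,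
        (∀ j, 0 ≤ τ j) → (∑ j, τ j) = 1 → (∀ j, 0 ≤ P j) → (∑ j, τ j * P j) ≤ Pbar →
        ∑ j, τ j * (ω j * Real.log (1 + η j * P j)) ≤ ω m * Real.log (1 + η m * Pbar)) := by
  have hbound : ∀ τ P : Fin n → ℝ, (∀ j, 0 ≤ τ j) → ∑ j, τ j = 1 → (∀ j, 0 ≤ P j) →
      ∑ j, τ j * P j ≤ Pbar → ∑ j, τ j * (ω j * log (1 + η j * P j))
        ≤ concaveEnvelope (fun j y => ω j * log (1 + η j * y)) Pbar :=
    fun _ _ => sum_mul_le_concaveEnvelope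
      (fun j => monotoneOn_mul_log_one_add_mul (hω j).le (hη j).le)
      (exists_concaveOn_majorant_mul_log_one_add_mul (fun j => (hω j).le) (fun j => (hη j).le))
  refine ⟨⟨Pi.single m 1, fun _ => Pbar, fun j => by simp only [Pi.single_apply]; positivity,
    by simp, fun _ => hP.le, by simp [Pi.single_apply], by simp [Pi.single_apply]⟩, hbound,
    fun henv τ P hτ0 hτ1 hP0 hPbar => (hbound τ P hτ0 hτ1 hP0 hPbar).trans_eq henv⟩

/-- The single-user allocation (τ_m = 1, P_m = P̄, m the argmax of f_j(P̄)) achieves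
the value h(P̄) = max_j f_j(P̄); every feasible allocation is bounded by the concave
envelope of h at P̄; hence the single-user allocation is exactly optimal whenever the
concave envelope coincides with h at P̄. -/
theorem stmt_11 {n : ℕ} (hn : 0 < n) (ω η : Fin n → ℝ)
    (hω : ∀ j, 0 < ω j) (hη : ∀ j, 0 < η j) (Pbar : ℝ) (hP : 0 < Pbar)
    (m : Fin n)
    (hm : ∀ j, ω j * Real.log (1 + η j * Pbar) ≤ ω m * Real.log (1 + η m * Pbar)) :
    (∃ τ P : Fin n → ℝ,
      (∀ j, 0 ≤ τ j) ∧ (∑ j, τ j) = 1 ∧ (∀ j, 0 ≤ P j) ∧ (∑ j, τ j * P j) ≤ Pbar ∧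
      ∑ j, τ j * (ω j * Real.log (1 + η j * P j)) = ω m * Real.log (1 + η m * Pbar)) ∧
    (∀ τ P : Fin n → ℝ,
      (∀ j, 0 ≤ τ j) → (∑ j, τ j) = 1 → (∀ j, 0 ≤ P j) → (∑ j, τ j * P j) ≤ Pbar →
      ∑ j, τ j * (ω j * Real.log (1 + η j * P j))
        ≤ sInf {v : ℝ | ∃ g : ℝ → ℝ, ConcaveOn ℝ (Set.Ici 0) g ∧
            (∀ y, 0 ≤ y → ∀ j, ω j * Real.log (1 + η j * y) ≤ g y) ∧ v = g Pbar}) ∧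
    ((sInf {v : ℝ | ∃ g : ℝ → ℝ, ConcaveOn ℝ (Set.Ici 0) g ∧
        (∀ y, 0 ≤ y → ∀ j, ω j * Real.log (1 + η j * y) ≤ g y) ∧ v = g Pbar})
        = ω m * Real.log (1 + η m * Pbar) →
      ∀ τ P : Fin n → ℝ,
        (∀ j, 0 ≤ τ j) → (∑ j, τ j) = 1 → (∀ j, 0 ≤ P j) → (∑ j, τ j * P j) ≤ Pbar →
        ∑ j, τ j * (ω j * Real.log (1 + η j * P j)) ≤ ω m * Real.log (1 + η m * Pbar)) :=
  stmt_11_general ω η hω hη Pbar hP m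
end

section
/- For the two-virtual-user representation of a user with DT gain η_DT = γ_sd and DF gain η_DF = 2γ_sd·α (α > 1) and weights ω_DT = μ, ω_DF = μ/2, the DF virtual user is selected under the water-filling rule (i.e., f_DF(P_DF*) − λP_DF* > f_DT(P_DT*) − λP_DT*) if and only if the power price λ is sufficiently large relative to μγ_sd; in particular, as λ → ∞ (low-power regime) DF dominates, and as λ → 0 (high-power regime) DT dominates. -/
open Real Set

private lemma log_gap {x y : ℝ} (hx : 0 < x) (hxy : x < y) :
    (y - x) / y < Real.log y - Real.log x := by
  have hy : 0 < y := hx.trans hxy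
  have h1 : Real.log (x / y) < x / y - 1 :=
    Real.log_lt_sub_one_of_pos (div_pos hx hy) (by
      intro h
      rw [div_eq_one_iff_eq hy.ne'] at h
      exact hxy.ne h)
  rw [Real.log_div hx.ne' hy.ne'] at h1
  have h2 : (y - x) / y = 1 - x / y := by field_simp
  rw [h2]; linarith

private lemma threshold (μ γ α : ℝ) (hμ : 0 < μ) (hγ : 0 < γ) (hα : 1 < α) :
    ∃ lam0 : ℝ, 0 < lam0 ∧ lam0 ≤ μ * γ ∧ ∀ lam : ℝ, 0 < lam → lam < μ * γ →
      (0 ≤ (μ/2) * Real.log lam + (μ/2) * (Real.log α + 1 - Real.log (μ*γ))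
          - (2*α-1)/(2*γ*α) * lam ↔ lam0 ≤ lam) := by
  have hα0 : 0 < α := lt_trans one_pos hα
  have h2α1 : 0 < 2*α - 1 := by linarith
  set C : ℝ := (μ/2) * (Real.log α + 1 - Real.log (μ*γ)) with hC
  set c : ℝ := (2*α-1)/(2*γ*α) with hc
  set D : ℝ → ℝ := fun l => (μ/2) * Real.log l + C - c * l with hD
  set L : ℝ := μ*γ*α/(2*α-1) with hL
  have hc0 : 0 < c := div_pos h2α1 (by positivity)
  have hL0 : 0 < L := div_pos (by positivity) h2α1
  have hLμγ : L ≤ μ * γ := by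
    rw [hL, div_le_iff₀ h2α1]
    nlinarith [mul_pos (mul_pos hμ hγ) (sub_pos.mpr hα)]
  -- strict monotonicity of D on (0, L]
  have hmono : ∀ x y : ℝ, 0 < x → x < y → y ≤ L → D x < D y := by
    intro x y hx hxy hyL
    have hy : 0 < y := hx.trans hxy
    have h1 := log_gap hx hxy
    have hcy : c * y ≤ μ/2 := by
      have : y * (2*α-1) ≤ μ*γ*α := by
        rw [hL, le_div_iff₀ h2α1] at hyL; linarith
      rw [hc, div_mul_eq_mul_div, div_le_iff₀ (by positivity)]
      nlinarith
    have h2 : (μ/2) * ((y-x)/y) - c * (y-x) = ((y-x)/y) * (μ/2 - c*y) := by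
      field_simp
    have h2' : 0 ≤ (μ/2) * ((y-x)/y) - c * (y-x) := by
      rw [h2]
      exact mul_nonneg (div_nonneg (by linarith) hy.le) (by linarith)
    have h3 : (μ/2) * ((y-x)/y) < (μ/2) * (Real.log y - Real.log x) :=
      mul_lt_mul_of_pos_left h1 (by positivity)
    simp only [hD]
    nlinarith
  -- positivity of D on [L, μγ]
  have hαlog : 1 - 1/α < Real.log α := by
    have h := log_gap one_pos hα
    rw [Real.log_one] at h
    have : (α - 1)/α = 1 - 1/α := by field_simp
    linarith [this ▸ h]
  have hpos : ∀ l : ℝ, L ≤ l → l ≤ μ*γ → 0 < D l := by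
    intro l h1 h2
    have hl0 : 0 < l := lt_of_lt_of_le hL0 h1
    have hlog : Real.log (μ*γ) - Real.log l ≤ μ*γ/l - 1 := by
      have h := Real.log_le_sub_one_of_pos (show (0:ℝ) < μ*γ/l by positivity)
      rwa [Real.log_div (by positivity : (0:ℝ) < μ*γ).ne' hl0.ne'] at h
    have hnum : 0 ≤ ((2*α-1)*l - μ*γ*α) * (μ*γ - l) := by
      apply mul_nonneg _ (by linarith)
      rw [hL, div_le_iff₀ h2α1] at h1
      linarith
    have hid : (μ/2)*(3 - 1/α) - ((μ/2)*(μ*γ/l) + c*l)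
        = ((2*α-1)*l - μ*γ*α) * (μ*γ - l) / (2*γ*α*l) := by
      rw [hc]; field_simp; ring
    have step : (μ/2)*(μ*γ/l) + c*l ≤ (μ/2)*(3 - 1/α) := by
      rw [← sub_nonneg, hid]
      exact div_nonneg hnum (by positivity)
    have hαs : (μ/2)*(1 - 1/α) < (μ/2)*Real.log α :=
      mul_lt_mul_of_pos_left hαlog (by positivity)
    have hlogs : (μ/2)*(Real.log (μ*γ) - Real.log l) ≤ (μ/2)*(μ*γ/l - 1) :=
      mul_le_mul_of_nonneg_left hlog (by positivity)
    simp only [hD, hC]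
    nlinarith
  -- a point where D is negative
  set a : ℝ := min L (Real.exp ((-C - 1)/(μ/2))) with ha
  have ha0 : 0 < a := lt_min hL0 (Real.exp_pos _)
  have haL : a ≤ L := min_le_left _ _
  have hDa : D a < 0 := by
    have hloga : Real.log a ≤ (-C - 1)/(μ/2) := by
      calc Real.log a ≤ Real.log (Real.exp ((-C - 1)/(μ/2))) :=
            Real.log_le_log ha0 (min_le_right _ _)
        _ = (-C - 1)/(μ/2) := Real.log_exp _
    have h1 : (μ/2) * Real.log a ≤ -C - 1 := by
      have h := mul_le_mul_of_nonneg_left hloga (by positivity : (0:ℝ) ≤ μ/2)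
      rwa [mul_div_cancel₀ _ (by positivity : (μ/2 : ℝ) ≠ 0)] at h
    have hca : 0 < c * a := mul_pos hc0 ha0
    simp only [hD]
    linarith
  have hDL : 0 < D L := hpos L le_rfl hLμγ
  -- IVT
  have hsub : Icc a L ⊆ {(0:ℝ)}ᶜ := by
    intro x hx
    simp only [Set.mem_compl_iff, Set.mem_singleton_iff]
    exact (lt_of_lt_of_le ha0 hx.1).ne'
  have hcont : ContinuousOn D (Icc a L) := by
    simp only [hD]
    exact ((continuousOn_const.mul (Real.continuousOn_log.mono hsub)).add
      continuousOn_const).sub (continuousOn_const.mul continuousOn_id)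
  have hIVT := intermediate_value_Icc haL hcont
  have h0mem : (0:ℝ) ∈ Icc (D a) (D L) := ⟨hDa.le, hDL.le⟩
  obtain ⟨lam0, hmem, hval⟩ := hIVT h0mem
  refine ⟨lam0, lt_of_lt_of_le ha0 hmem.1, le_trans hmem.2 hLμγ, ?_⟩
  intro lam hlam _
  constructor
  · intro h
    by_contra hlt
    push_neg at hlt
    have := hmono lam lam0 hlam hlt hmem.2
    rw [hval] at this
    simp only [hD] at this h
    linarith
  · intro h
    rcases le_or_gt lam L with hlamL | hlamL
    · rcases eq_or_lt_of_le h with heq | hlt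
      · rw [← heq]
        simp only [hD] at hval ⊢
        linarith [hval]
      · have := hmono lam0 lam (lt_of_lt_of_le ha0 hmem.1) hlt hlamL
        rw [hval] at this
        simp only [hD] at this ⊢
        linarith
    · have := hpos lam hlamL.le (by linarith)
      simp only [hD] at this ⊢
      linarith

/-- With DT virtual user (ω = μ, η = γ_sd) and DF virtual user (ω = μ/2, η = 2γ_sd α),
there is a power-price threshold lam0 > 0 such that the scheduler's Lagrangian value of
the DF user dominates that of the DT user iff λ ≥ lam0: DF wins at low power
(large λ), DT wins at high power (small λ). -/
theorem stmt_13 (μ γ α : ℝ) (hμ : 0 < μ) (hγ : 0 < γ) (hα : 1 < α) :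
    ∃ lam0 : ℝ, 0 < lam0 ∧ ∀ lam : ℝ, 0 < lam →
      (μ * Real.log (1 + γ * max (μ / lam - 1 / γ) 0) - lam * max (μ / lam - 1 / γ) 0
        ≤ (μ / 2) * Real.log (1 + (2 * γ * α) * max ((μ / 2) / lam - 1 / (2 * γ * α)) 0)
            - lam * max ((μ / 2) / lam - 1 / (2 * γ * α)) 0
        ↔ lam0 ≤ lam) := by
  have hα0 : 0 < α := lt_trans one_pos hα
  obtain ⟨lam0, hlam0, hlam0μγ, hiff⟩ := threshold μ γ α hμ hγ hα
  refine ⟨lam0, hlam0, ?_⟩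
  intro lam hlam
  rcases lt_or_ge lam (μ*γ) with hcase | hcase
  · -- both powers positive
    have hmax1 : max (μ / lam - 1 / γ) 0 = μ / lam - 1 / γ := by
      apply max_eq_left
      rw [sub_nonneg, div_le_div_iff₀ hγ hlam]
      linarith
    have hmax2 : max ((μ/2) / lam - 1 / (2*γ*α)) 0 = (μ/2) / lam - 1 / (2*γ*α) := by
      apply max_eq_left
      rw [sub_nonneg, div_le_div_iff₀ (by positivity) hlam]
      nlinarith
    have e1 : 1 + γ * (μ / lam - 1 / γ) = μ*γ/lam := by
      field_simp; ring
    have e2 : 1 + (2*γ*α) * ((μ/2) / lam - 1 / (2*γ*α)) = μ*γ*α/lam := by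
      field_simp; ring
    have l1 : Real.log (μ*γ/lam) = Real.log (μ*γ) - Real.log lam :=
      Real.log_div (by positivity) hlam.ne'
    have l2 : Real.log (μ*γ*α/lam) = Real.log (μ*γ) + Real.log α - Real.log lam := by
      rw [Real.log_div (by positivity) hlam.ne', Real.log_mul (by positivity) hα0.ne']
    have key : ((μ/2) * Real.log (1 + (2*γ*α) * max ((μ/2) / lam - 1 / (2*γ*α)) 0)
            - lam * max ((μ/2) / lam - 1 / (2*γ*α)) 0)
        - (μ * Real.log (1 + γ * max (μ / lam - 1 / γ) 0) - lam * max (μ / lam - 1 / γ) 0)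
        = (μ/2) * Real.log lam + (μ/2) * (Real.log α + 1 - Real.log (μ*γ))
          - (2*α-1)/(2*γ*α) * lam := by
      rw [hmax1, hmax2, e1, e2, l1, l2]
      field_simp
      ring
    rw [← hiff lam hlam hcase, ← key]
    constructor <;> intro h <;> linarith
  · -- lam ≥ μγ : DT value is 0, DF value ≥ 0, threshold satisfied
    have hmax1 : max (μ / lam - 1 / γ) 0 = 0 := by
      apply max_eq_right
      rw [sub_nonpos, div_le_div_iff₀ hlam hγ]
      linarith
    have hRHS : lam0 ≤ lam := le_trans hlam0μγ hcase
    have hLHS : μ * Real.log (1 + γ * max (μ / lam - 1 / γ) 0)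
        - lam * max (μ / lam - 1 / γ) 0 = 0 := by
      rw [hmax1]; simp
    have hDF : 0 ≤ (μ/2) * Real.log (1 + (2*γ*α) * max ((μ/2) / lam - 1 / (2*γ*α)) 0)
        - lam * max ((μ/2) / lam - 1 / (2*γ*α)) 0 := by
      rcases lt_or_ge lam (μ*γ*α) with h2 | h2
      · have hmax2 : max ((μ/2) / lam - 1 / (2*γ*α)) 0 = (μ/2) / lam - 1 / (2*γ*α) := by
          apply max_eq_left
          rw [sub_nonneg, div_le_div_iff₀ (by positivity) hlam]
          nlinarith
        have e2 : 1 + (2*γ*α) * ((μ/2) / lam - 1 / (2*γ*α)) = μ*γ*α/lam := by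
          field_simp; ring
        have l2 : Real.log (μ*γ*α/lam) = Real.log (μ*γ*α) - Real.log lam :=
          Real.log_div (by positivity) hlam.ne'
        have hlog : Real.log lam - Real.log (μ*γ*α) ≤ lam/(μ*γ*α) - 1 := by
          have h := Real.log_le_sub_one_of_pos (show (0:ℝ) < lam/(μ*γ*α) by positivity)
          rwa [Real.log_div hlam.ne' (by positivity : (μ*γ*α:ℝ) ≠ 0)] at h
        have hid1 : lam * ((μ/2) / lam - 1 / (2*γ*α)) = μ/2 - lam/(2*γ*α) := by
          field_simp
        have hid2 : (μ/2) * (lam/(μ*γ*α)) = lam/(2*γ*α) := by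
          field_simp
        have hlogs : (μ/2) * (Real.log lam - Real.log (μ*γ*α))
            ≤ (μ/2) * (lam/(μ*γ*α) - 1) :=
          mul_le_mul_of_nonneg_left hlog (by positivity)
        rw [hmax2, e2, l2, hid1]
        nlinarith
      · have hmax2 : max ((μ/2) / lam - 1 / (2*γ*α)) 0 = 0 := by
          apply max_eq_right
          rw [sub_nonpos, div_le_div_iff₀ hlam (by positivity)]
          nlinarith
        rw [hmax2]; simp
    constructor
    · intro _; exact hRHS
    · intro _; rw [hLHS]; exact hDF
end

section
/- For the MISO RDF power gain α(Ω) = (m(Ω)·s(Ω)) / (m(Ω) + s(Ω) − 1) with m(Ω) = min_{j∈Ω} γ'_sr_j and s(Ω) = 1 + Σ_{j∈Ω} γ'_rd_j, removing from Ω the relay with the smallest source-relay gain weakly increases m and strictly decreases s; consequently, the maximizing subset over all nonempty Ω ⊆ {relays with γ'_sr_j > 1} is attained among the nested family of sets obtained by successively deleting the relay with minimal γ'_sr. -/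
/-- MISO RDF relay selection. (a) Removing from Ω a relay with the smallest
source-relay gain weakly increases m(Ω) = min_{j∈Ω} γ'_sr_j and strictly decreases
s(Ω) = 1 + Σ_{j∈Ω} γ'_rd_j. (b) There is a subset maximizing
α(Ω) = m(Ω)s(Ω)/(m(Ω)+s(Ω)−1) which is a suffix of the relays sorted in increasing
order of γ'_sr. -/
theorem stmt_16 {ι : Type*} [DecidableEq ι] (R : Finset ι) (hR : R.Nonempty)
    (gsr grd : ι → ℝ) (hsr : ∀ j ∈ R, 1 < gsr j) (hrd : ∀ j ∈ R, 0 < grd j) :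
    (∀ Ω : Finset ι, Ω ⊆ R → ∀ j ∈ Ω, ∀ hne : (Ω.erase j).Nonempty,
      (∀ i ∈ Ω, gsr j ≤ gsr i) →
        Ω.inf' (hne.mono (Finset.erase_subset j Ω)) gsr ≤ (Ω.erase j).inf' hne gsr ∧
        1 + ∑ i ∈ Ω.erase j, grd i < 1 + ∑ i ∈ Ω, grd i) ∧
    (∃ Ω : Finset ι, ∃ hΩR : Ω ⊆ R, ∃ hΩ : Ω.Nonempty,
      (∀ i ∈ Ω, ∀ j ∈ R, gsr i ≤ gsr j → j ∈ Ω) ∧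
      (∀ Ω' : Finset ι, Ω' ⊆ R → ∀ hΩ' : Ω'.Nonempty,
        (Ω'.inf' hΩ' gsr) * (1 + ∑ i ∈ Ω', grd i)
            / (Ω'.inf' hΩ' gsr + (1 + ∑ i ∈ Ω', grd i) - 1)
          ≤ (Ω.inf' hΩ gsr) * (1 + ∑ i ∈ Ω, grd i)
            / (Ω.inf' hΩ gsr + (1 + ∑ i ∈ Ω, grd i) - 1))) := by
  classical
  constructor
  · intro Ω hΩR j hj hne _hmin
    constructor
    · exact Finset.inf'_mono gsr (Finset.erase_subset j Ω) hne
    · have := Finset.sum_erase_add Ω grd hj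
      have hgj : 0 < grd j := hrd j (hΩR hj)
      linarith
  · -- define f on finsets with a junk value on ∅
    set f : Finset ι → ℝ := fun Ω =>
      if h : Ω.Nonempty then
        (Ω.inf' h gsr) * (1 + ∑ i ∈ Ω, grd i)
          / (Ω.inf' h gsr + (1 + ∑ i ∈ Ω, grd i) - 1)
      else 0 with hf
    have hfval : ∀ (Ω : Finset ι) (h : Ω.Nonempty),
        f Ω = (Ω.inf' h gsr) * (1 + ∑ i ∈ Ω, grd i)
          / (Ω.inf' h gsr + (1 + ∑ i ∈ Ω, grd i) - 1) := by
      intro Ω h; simp [hf, h]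
    -- the finite family of nonempty subsets of R
    set S : Finset (Finset ι) := R.powerset.filter (fun Ω => Ω.Nonempty) with hS
    have hSne : S.Nonempty := by
      refine ⟨R, ?_⟩
      simp [hS, hR]
    obtain ⟨Ω0, hΩ0S, hmax⟩ := S.exists_max_image f hSne
    have hΩ0R : Ω0 ⊆ R := by
      have := (Finset.mem_filter.mp hΩ0S).1
      exact Finset.mem_powerset.mp this
    have hΩ0ne : Ω0.Nonempty := (Finset.mem_filter.mp hΩ0S).2
    set m : ℝ := Ω0.inf' hΩ0ne gsr with hm
    -- the upward-closed set
    set Ω : Finset ι := R.filter (fun j => m ≤ gsr j) with hΩdef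
    have hΩR : Ω ⊆ R := Finset.filter_subset _ _
    obtain ⟨i0, hi0, hi0eq⟩ := Finset.exists_mem_eq_inf' hΩ0ne gsr
    have hi0Ω : i0 ∈ Ω := by
      refine Finset.mem_filter.mpr ⟨hΩ0R hi0, le_of_eq (hm.trans hi0eq)⟩
    have hΩne : Ω.Nonempty := ⟨i0, hi0Ω⟩
    have hΩ0sub : Ω0 ⊆ Ω := by
      intro x hx
      exact Finset.mem_filter.mpr ⟨hΩ0R hx, Finset.inf'_le gsr hx⟩
    have hinfΩ : Ω.inf' hΩne gsr = m := by
      apply le_antisymm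
      · calc Ω.inf' hΩne gsr ≤ gsr i0 := Finset.inf'_le gsr hi0Ω
          _ = m := by rw [hm, hi0eq]
      · exact Finset.le_inf' _ _ (fun x hx => (Finset.mem_filter.mp hx).2)
    have hm1 : 1 < m := by
      rw [hm, hi0eq]; exact hsr i0 (hΩ0R hi0)
    have hsum_le : ∑ i ∈ Ω0, grd i ≤ ∑ i ∈ Ω, grd i :=
      Finset.sum_le_sum_of_subset_of_nonneg hΩ0sub
        (fun x hx _ => le_of_lt (hrd x (hΩR hx)))
    have hsum0pos : 0 < ∑ i ∈ Ω0, grd i :=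
      Finset.sum_pos (fun x hx => hrd x (hΩ0R hx)) hΩ0ne
    -- α(Ω0) ≤ α(Ω)
    have hkey : f Ω0 ≤ f Ω := by
      rw [hfval Ω0 hΩ0ne, hfval Ω hΩne, hinfΩ, ← hm]
      set s0 : ℝ := 1 + ∑ i ∈ Ω0, grd i with hs0
      set s1 : ℝ := 1 + ∑ i ∈ Ω, grd i with hs1
      have hs01 : s0 ≤ s1 := by rw [hs0, hs1]; linarith
      have hs0g : 1 < s0 := by rw [hs0]; linarith
      have hd0 : 0 < m + s0 - 1 := by linarith
      have hd1 : 0 < m + s1 - 1 := by linarith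
      rw [div_le_div_iff₀ hd0 hd1]
      nlinarith [mul_nonneg (sub_nonneg.mpr hs01) (sub_nonneg.mpr hm1.le)]
    refine ⟨Ω, hΩR, hΩne, ?_, ?_⟩
    · intro i hi j hjR hle
      exact Finset.mem_filter.mpr ⟨hjR, le_trans (Finset.mem_filter.mp hi).2 hle⟩
    · intro Ω' hΩ'R hΩ'ne
      have hΩ'S : Ω' ∈ S := Finset.mem_filter.mpr ⟨Finset.mem_powerset.mpr hΩ'R, hΩ'ne⟩
      have h1 : f Ω' ≤ f Ω0 := hmax Ω' hΩ'S
      have := le_trans h1 hkey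
      rwa [hfval Ω' hΩ'ne, hfval Ω hΩne] at this
end
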